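/- arXiv:0910.1059 — 4 statements merged into one kernel-verified Lean document; each statement's English description precedes it below -/
import Mathlib

section
/- Every metric space (X,d) with at most 4 points admits an isometric embedding into the rectilinear plane (ℝ², d₁), i.e., there is a map φ : X → ℝ² with d₁(φ(x), φ(y)) = d(x,y) for all x, y ∈ X. -/
/-- The l1-metric on the plane. -/
def d1 (x y : ℝ × ℝ) : ℝ := |x.1 - y.1| + |x.2 - y.2|

lemma d1_self (p : ℝ × ℝ) : d1 p p = 0 := by simp [d1]

lemma d1_comm (p q : ℝ × ℝ) : d1 p q = d1 q p := by
  simp [d1, abs_sub_comm]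

/-- The purely arithmetic core: any six numbers satisfying the needed triangle
inequalities, and such that the matching sum `d14+d23` is the largest, can be
realized as the six pairwise l1-distances of four points in the plane. -/
lemma real_key (d12 d13 d14 d23 d24 d34 : ℝ)
    (t1 : d23 ≤ d12 + d13) (t2 : d14 ≤ d12 + d24)
    (t3 : d14 ≤ d13 + d34) (t4 : d23 ≤ d24 + d34)
    (hP : d12 + d34 ≤ d14 + d23) (hQ : d13 + d24 ≤ d14 + d23) :
    ∃ p1 p2 p3 p4 : ℝ × ℝ, d1 p1 p2 = d12 ∧ d1 p1 p3 = d13 ∧ d1 p1 p4 = d14 ∧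
      d1 p2 p3 = d23 ∧ d1 p2 p4 = d24 ∧ d1 p3 p4 = d34 := by
  set l1 : ℝ := (d12 + d13 - d23)/2 with hl1
  set l2 : ℝ := (d12 + d24 - d14)/2 with hl2
  set l3 : ℝ := (d13 + d34 - d14)/2 with hl3
  set l4 : ℝ := (d24 + d34 - d23)/2 with hl4
  set a : ℝ := (d14 + d23 - d12 - d34)/2 with ha
  set b : ℝ := (d14 + d23 - d13 - d24)/2 with hb
  have h1 : (0:ℝ) ≤ l1 := by rw [hl1]; linarith
  have h2 : (0:ℝ) ≤ l2 := by rw [hl2]; linarith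
  have h3 : (0:ℝ) ≤ l3 := by rw [hl3]; linarith
  have h4 : (0:ℝ) ≤ l4 := by rw [hl4]; linarith
  have hA : (0:ℝ) ≤ a := by rw [ha]; linarith
  have hB : (0:ℝ) ≤ b := by rw [hb]; linarith
  refine ⟨(0, l2 + b), (l1, 0), (l1 + a, l2 + b + l3), (l1 + a + l4, l2),
    ?_, ?_, ?_, ?_, ?_, ?_⟩ <;> simp only [d1]
  · rw [show (0:ℝ) - l1 = -l1 by ring, abs_neg, abs_of_nonneg h1,
      abs_of_nonneg (by linarith : (0:ℝ) ≤ l2 + b - 0)]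
    rw [hl1, hl2, hb]; ring
  · rw [show (0:ℝ) - (l1 + a) = -(l1 + a) by ring, abs_neg,
      abs_of_nonneg (by linarith : (0:ℝ) ≤ l1 + a),
      show l2 + b - (l2 + b + l3) = -l3 by ring, abs_neg, abs_of_nonneg h3]
    rw [hl1, ha, hl3]; ring
  · rw [show (0:ℝ) - (l1 + a + l4) = -(l1 + a + l4) by ring, abs_neg,
      abs_of_nonneg (by linarith : (0:ℝ) ≤ l1 + a + l4),
      show l2 + b - l2 = b by ring, abs_of_nonneg hB]
    rw [hl1, ha, hl4, hb]; ring
  · rw [show l1 - (l1 + a) = -a by ring, abs_neg, abs_of_nonneg hA,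
      show (0:ℝ) - (l2 + b + l3) = -(l2 + b + l3) by ring, abs_neg,
      abs_of_nonneg (by linarith : (0:ℝ) ≤ l2 + b + l3)]
    rw [ha, hl2, hb, hl3]; ring
  · rw [show l1 - (l1 + a + l4) = -(a + l4) by ring, abs_neg,
      abs_of_nonneg (by linarith : (0:ℝ) ≤ a + l4),
      show (0:ℝ) - l2 = -l2 by ring, abs_neg, abs_of_nonneg h2]
    rw [ha, hl4, hl2]; ring
  · rw [show l1 + a - (l1 + a + l4) = -l4 by ring, abs_neg, abs_of_nonneg h4,
      show l2 + b + l3 - l2 = b + l3 by ring,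
      abs_of_nonneg (by linarith : (0:ℝ) ≤ b + l3)]
    rw [hl4, hb, hl3]; ring

/-- Four points with the maximal matching sum on pairs (1,4),(2,3) embed. -/
lemma key {X : Type*} [MetricSpace X] (x1 x2 x3 x4 : X)
    (hP : dist x1 x2 + dist x3 x4 ≤ dist x1 x4 + dist x2 x3)
    (hQ : dist x1 x3 + dist x2 x4 ≤ dist x1 x4 + dist x2 x3) :
    ∃ p1 p2 p3 p4 : ℝ × ℝ, d1 p1 p2 = dist x1 x2 ∧ d1 p1 p3 = dist x1 x3 ∧
      d1 p1 p4 = dist x1 x4 ∧ d1 p2 p3 = dist x2 x3 ∧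
      d1 p2 p4 = dist x2 x4 ∧ d1 p3 p4 = dist x3 x4 := by
  apply real_key
  · linarith [dist_triangle x2 x1 x3, dist_comm x2 x1]
  · exact dist_triangle x1 x2 x4
  · exact dist_triangle x1 x3 x4
  · linarith [dist_triangle x2 x4 x3, dist_comm x4 x3]
  · exact hP
  · exact hQ

/-- Any four points of a metric space embed (no maximality assumption). -/
lemma embed4 {X : Type*} [MetricSpace X] (x1 x2 x3 x4 : X) :
    ∃ p1 p2 p3 p4 : ℝ × ℝ, d1 p1 p2 = dist x1 x2 ∧ d1 p1 p3 = dist x1 x3 ∧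
      d1 p1 p4 = dist x1 x4 ∧ d1 p2 p3 = dist x2 x3 ∧
      d1 p2 p4 = dist x2 x4 ∧ d1 p3 p4 = dist x3 x4 := by
  by_cases hPR : dist x1 x2 + dist x3 x4 ≤ dist x1 x4 + dist x2 x3
  · by_cases hQR : dist x1 x3 + dist x2 x4 ≤ dist x1 x4 + dist x2 x3
    · exact key x1 x2 x3 x4 hPR hQR
    · -- Q = d13 + d24 is the max; use (x1, x2, x4, x3)
      push_neg at hQR
      obtain ⟨q1, q2, q3, q4, h12, h14, h13, h24, h23, h43⟩ :=
        key x1 x2 x4 x3 (by linarith [dist_comm x4 x3])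
          (by linarith)
      exact ⟨q1, q2, q4, q3, h12, h13, h14,
        h23, h24, by rw [d1_comm, dist_comm]; exact h43⟩
  · push_neg at hPR
    by_cases hQP : dist x1 x3 + dist x2 x4 ≤ dist x1 x2 + dist x3 x4
    · -- P = d12 + d34 is the max; use (x1, x3, x4, x2)
      obtain ⟨q1, q2, q3, q4, h13, h14, h12, h34, h32, h42⟩ :=
        key x1 x3 x4 x2 (by linarith [dist_comm x4 x2])
          (by linarith [dist_comm x3 x2])
      refine ⟨q1, q4, q2, q3, h12, h13, h14, ?_, ?_, h34⟩
      · rw [d1_comm, dist_comm]; exact h32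
      · rw [d1_comm, dist_comm]; exact h42
    · -- Q is the max again
      push_neg at hQP
      obtain ⟨q1, q2, q3, q4, h12, h14, h13, h24, h23, h43⟩ :=
        key x1 x2 x4 x3 (by linarith [dist_comm x4 x3])
          (by linarith)
      exact ⟨q1, q2, q4, q3, h12, h13, h14,
        h23, h24, by rw [d1_comm, dist_comm]; exact h43⟩

/-- Every metric space with at most 4 points embeds isometrically into the
    rectilinear plane (ℝ², d₁). -/
theorem four_point_embeds_l1_plane (X : Type*) [MetricSpace X] [Fintype X]
    (h : Fintype.card X ≤ 4) :
    ∃ φ : X → ℝ × ℝ, ∀ x y : X, d1 (φ x) (φ y) = dist x y := by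
  cases isEmpty_or_nonempty X with
  | inl hE => exact ⟨fun x => (0, 0), fun x y => isEmptyElim x⟩
  | inr hN =>
    have hcard : Fintype.card X ≤ Fintype.card (Fin 4) := by simpa using h
    obtain ⟨ι⟩ := Function.Embedding.nonempty_of_card_le hcard
    set g : Fin 4 → X := Function.invFun ι with hgdef
    have hg : ∀ x, g (ι x) = x := Function.leftInverse_invFun ι.injective
    obtain ⟨p1, p2, p3, p4, h12, h13, h14, h23, h24, h34⟩ :=
      embed4 (g 0) (g 1) (g 2) (g 3)
    have hkey : ∀ i j : Fin 4,
        d1 (![p1, p2, p3, p4] i) (![p1, p2, p3, p4] j) = dist (g i) (g j) := by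
      intro i j
      fin_cases i <;> fin_cases j <;>
        simp only [Matrix.cons_val_zero, Matrix.cons_val_one, Matrix.head_cons,
          Matrix.cons_val_two, Matrix.tail_cons, Matrix.cons_val_three,
          Matrix.cons_val_fin_one, Fin.isValue] <;>
        first
          | (rw [dist_self]; exact d1_self _)
          | exact h12 | exact h13 | exact h14 | exact h23 | exact h24 | exact h34
          | (rw [d1_comm, dist_comm]; first
              | exact h12 | exact h13 | exact h14
              | exact h23 | exact h24 | exact h34)
    refine ⟨fun x => ![p1, p2, p3, p4] (ι x), fun x y => ?_⟩
    calc d1 (![p1, p2, p3, p4] (ι x)) (![p1, p2, p3, p4] (ι y))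
        = dist (g (ι x)) (g (ι y)) := hkey (ι x) (ι y)
      _ = dist x y := by rw [hg x, hg y]
end

section
/- There is no set of 5 points in ℝ² that are pairwise at l1-distance 1 from each other; consequently, the 5-point metric space in which all pairwise distances equal 1 does not embed isometrically into the rectilinear plane (ℝ², d₁). -/
/-- There is no set of 5 points in the rectilinear plane pairwise at
    l1-distance 1; hence the 5-point equilateral metric space does not embed
    isometrically into (ℝ², d₁). -/
theorem no_five_equidistant_points_l1 :
    ¬ ∃ p : Fin 5 → ℝ × ℝ, ∀ i j : Fin 5, i ≠ j → d1 (p i) (p j) = 1 := by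
  rintro ⟨p, hp⟩
  set u : Fin 5 → ℝ := fun i => (p i).1 + (p i).2 with hu
  set v : Fin 5 → ℝ := fun i => (p i).1 - (p i).2 with hv
  clear_value u v
  obtain ⟨i0, -, hi0⟩ := Finset.exists_min_image Finset.univ u ⟨0, Finset.mem_univ 0⟩
  obtain ⟨j0, -, hj0⟩ := Finset.exists_min_image Finset.univ v ⟨0, Finset.mem_univ 0⟩
  have hdle : ∀ i j : Fin 5, |u i - u j| ≤ 1 ∧ |v i - v j| ≤ 1 := by
    intro i j
    by_cases h : i = j
    · subst h; simp
    · have hd := hp i j h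
      unfold d1 at hd
      have h1 : |(p i).1 - (p j).1| ≥ 0 := abs_nonneg _
      have h2 : |(p i).2 - (p j).2| ≥ 0 := abs_nonneg _
      constructor
      · have : |u i - u j| ≤ |(p i).1 - (p j).1| + |(p i).2 - (p j).2| := by
          have := abs_add_le ((p i).1 - (p j).1) ((p i).2 - (p j).2)
          simp only [hu]
          calc |(p i).1 + (p i).2 - ((p j).1 + (p j).2)|
              = |((p i).1 - (p j).1) + ((p i).2 - (p j).2)| := by ring_nf
            _ ≤ _ := this
        linarith
      · have : |v i - v j| ≤ |(p i).1 - (p j).1| + |(p i).2 - (p j).2| := by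
          have := abs_sub ((p i).1 - (p j).1) ((p i).2 - (p j).2)
          simp only [hv]
          calc |(p i).1 - (p i).2 - ((p j).1 - (p j).2)|
              = |((p i).1 - (p j).1) - ((p i).2 - (p j).2)| := by ring_nf
            _ ≤ _ := this
        linarith
  have hub : ∀ i, u i ≤ u i0 + 1 := fun i => by
    have := (hdle i i0).1
    have := abs_le.mp this
    linarith [this.2]
  have hvb : ∀ i, v i ≤ v j0 + 1 := fun i => by
    have := (hdle i j0).2
    have := abs_le.mp this
    linarith [(abs_le.mp (hdle i j0).2).2]
  -- classify points into 4 quadrants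
  have hcard : Fintype.card (Bool × Bool) < Fintype.card (Fin 5) := by simp
  obtain ⟨i, j, hij, hfeq⟩ :=
    Fintype.exists_ne_map_eq_of_card_lt
      (fun i => ((decide (u i ≤ u i0 + 1/2), decide (v i ≤ v j0 + 1/2)) : Bool × Bool)) hcard
  have hfu : (u i ≤ u i0 + 1/2) ↔ (u j ≤ u i0 + 1/2) := by
    have := congrArg Prod.fst hfeq
    simpa [decide_eq_decide] using this
  have hfv : (v i ≤ v j0 + 1/2) ↔ (v j ≤ v j0 + 1/2) := by
    have := congrArg Prod.snd hfeq
    simpa [decide_eq_decide] using this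
  have hulo_i : u i0 ≤ u i := hi0 i (Finset.mem_univ i)
  have hulo_j : u i0 ≤ u j := hi0 j (Finset.mem_univ j)
  have hvlo_i : v j0 ≤ v i := hj0 i (Finset.mem_univ i)
  have hvlo_j : v j0 ≤ v j := hj0 j (Finset.mem_univ j)
  have hult : |u i - u j| < 1 := by
    rcases le_or_gt (u i) (u i0 + 1/2) with h | h
    · have h' := hfu.mp h
      rw [abs_lt]; constructor <;> linarith
    · have h' : ¬ (u j ≤ u i0 + 1/2) := fun hc => absurd (hfu.mpr hc) (not_le.mpr h)
      push_neg at h'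
      have := hub i; have := hub j
      rw [abs_lt]; constructor <;> linarith
  have hvlt : |v i - v j| < 1 := by
    rcases le_or_gt (v i) (v j0 + 1/2) with h | h
    · have h' := hfv.mp h
      rw [abs_lt]; constructor <;> linarith
    · have h' : ¬ (v j ≤ v j0 + 1/2) := fun hc => absurd (hfv.mpr hc) (not_le.mpr h)
      push_neg at h'
      have := hvb i; have := hvb j
      rw [abs_lt]; constructor <;> linarith
  -- derive contradiction: |a| + |b| = 1 but |a+b| < 1 and |a−b| < 1
  have hd := hp i j hij
  unfold d1 at hd
  set a := (p i).1 - (p j).1 with ha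
  set b := (p i).2 - (p j).2 with hb
  have hab1 : |a + b| < 1 := by
    have : u i - u j = a + b := by simp [hu, ha, hb]; ring
    rwa [this] at hult
  have hab2 : |a - b| < 1 := by
    have : v i - v j = a - b := by simp [hv, ha, hb]; ring
    rwa [this] at hvlt
  have h1 := abs_lt.mp hab1
  have h2 := abs_lt.mp hab2
  rcases abs_cases a with ⟨ea, _⟩ | ⟨ea, _⟩ <;> rcases abs_cases b with ⟨eb, _⟩ | ⟨eb, _⟩ <;>
    rw [ea, eb] at hd <;> linarith [h1.1, h1.2, h2.1, h2.2]
end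

section
/- Let a, b > 0 and let φ be an isometric embedding of the rectangle R = [0,a] × [0,b], endowed with the l1-metric, into (ℝ², d₁). Then φ is of the form φ(x) = v + (ε₁ x_{σ(1)}, ε₂ x_{σ(2)}) for some v ∈ ℝ², signs ε₁, ε₂ ∈ {−1, +1}, and a permutation σ of {1,2}; in particular the image φ(R) is an axis-parallel rectangle whose side lengths are a and b (possibly interchanged). -/
set_option maxHeartbeats 1000000

private lemma d1_split {x z y : ℝ × ℝ} (h : d1 x z + d1 z y = d1 x y) :
    |x.1 - z.1| + |z.1 - y.1| = |x.1 - y.1| ∧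
    |x.2 - z.2| + |z.2 - y.2| = |x.2 - y.2| := by
  have t1 := abs_sub_le x.1 z.1 y.1
  have t2 := abs_sub_le x.2 z.2 y.2
  unfold d1 at h
  constructor <;> linarith

private lemma tripod (p q s t : ℝ)
    (h1 : |p - q| + |q - t| = |p - t|)
    (h2 : |p - s| + |s - t| = |p - t|)
    (h3 : |q - p| + |p - s| = |q - s|)
    (h4 : |q - t| + |t - s| = |q - s|) :
    (q = p ∧ s = t) ∨ (s = p ∧ q = t) := by
  rw [abs_sub_comm q p] at h3
  rw [abs_sub_comm t s] at h4
  rcases abs_cases (p - q) with ⟨e1,f1⟩|⟨e1,f1⟩ <;>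
  rcases abs_cases (q - t) with ⟨e2,f2⟩|⟨e2,f2⟩ <;>
  rcases abs_cases (p - t) with ⟨e3,f3⟩|⟨e3,f3⟩ <;>
  rcases abs_cases (p - s) with ⟨e4,f4⟩|⟨e4,f4⟩ <;>
  rcases abs_cases (s - t) with ⟨e5,f5⟩|⟨e5,f5⟩ <;>
  rcases abs_cases (q - s) with ⟨e7,f7⟩|⟨e7,f7⟩ <;>
  first
    | exact Or.inl ⟨by linarith, by linarith⟩
    | exact Or.inr ⟨by linarith, by linarith⟩

private lemma solve1 (L x ε z : ℝ) (hx0 : 0 ≤ x) (hxL : x ≤ L)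
    (hε : ε = 1 ∨ ε = -1) (h1 : |z| = x) (h2 : |z - ε * L| = L - x) :
    z = ε * x := by
  rcases hε with rfl|rfl
  · rcases abs_cases z with ⟨e1,f1⟩|⟨e1,f1⟩ <;>
    rcases abs_cases (z - 1 * L) with ⟨e2,f2⟩|⟨e2,f2⟩ <;> linarith
  · rcases abs_cases z with ⟨e1,f1⟩|⟨e1,f1⟩ <;>
    rcases abs_cases (z - -1 * L) with ⟨e2,f2⟩|⟨e2,f2⟩ <;> linarith

private lemma d1_swap (x y : ℝ × ℝ) : d1 (Prod.swap x) (Prod.swap y) = d1 x y := by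
  unfold d1 Prod.swap
  exact add_comm _ _

private lemma oneD (c ε L : ℝ) (hε : ε = 1 ∨ ε = -1) :
    ∃ c', (fun t => c + ε * t) '' Set.Icc (0:ℝ) L = Set.Icc c' (c' + L) := by
  rcases hε with rfl|rfl
  · refine ⟨c, ?_⟩
    have h : (fun t : ℝ => c + 1 * t) = (fun t => c + t) := by funext t; ring
    rw [h, Set.image_const_add_Icc, add_zero]
  · refine ⟨c - L, ?_⟩
    have h : (fun t : ℝ => c + (-1) * t) = (fun t => c - t) := by funext t; ring
    rw [h, Set.image_const_sub_Icc, sub_zero]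
    congr 1
    ring

private lemma lemA (a b ε₁ ε₂ : ℝ) (ha : 0 < a) (hb : 0 < b)
    (hε₁ : ε₁ = 1 ∨ ε₁ = -1) (hε₂ : ε₂ = 1 ∨ ε₂ = -1)
    (φ : ℝ × ℝ → ℝ × ℝ)
    (hφ : ∀ x ∈ Set.Icc (0:ℝ) a ×ˢ Set.Icc (0:ℝ) b,
          ∀ y ∈ Set.Icc (0:ℝ) a ×ˢ Set.Icc (0:ℝ) b,
          d1 (φ x) (φ y) = d1 x y)
    (hQ : φ (a,0) = ((φ (0,0)).1 + ε₁ * a, (φ (0,0)).2))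
    (hS : φ (0,b) = ((φ (0,0)).1, (φ (0,0)).2 + ε₂ * b)) :
    ∀ x ∈ Set.Icc (0:ℝ) a ×ˢ Set.Icc (0:ℝ) b,
      φ x = ((φ (0,0)).1 + ε₁ * x.1, (φ (0,0)).2 + ε₂ * x.2) := by
  intro x hx
  obtain ⟨⟨hx1, hx1'⟩, hx2, hx2'⟩ := hx
  have hx' : x ∈ Set.Icc (0:ℝ) a ×ˢ Set.Icc (0:ℝ) b := ⟨⟨hx1, hx1'⟩, hx2, hx2'⟩
  have m00 : ((0:ℝ),(0:ℝ)) ∈ Set.Icc (0:ℝ) a ×ˢ Set.Icc (0:ℝ) b :=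
    ⟨⟨le_refl 0, ha.le⟩, le_refl 0, hb.le⟩
  have ma0 : ((a:ℝ),(0:ℝ)) ∈ Set.Icc (0:ℝ) a ×ˢ Set.Icc (0:ℝ) b :=
    ⟨⟨ha.le, le_refl a⟩, le_refl 0, hb.le⟩
  have m0b : ((0:ℝ),(b:ℝ)) ∈ Set.Icc (0:ℝ) a ×ˢ Set.Icc (0:ℝ) b :=
    ⟨⟨le_refl 0, ha.le⟩, hb.le, le_refl b⟩
  have A := hφ x hx' _ m00
  have B := hφ x hx' _ ma0
  have C := hφ x hx' _ m0b
  rw [hQ] at B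
  rw [hS] at C
  unfold d1 at A B C
  simp only [sub_zero] at A B C
  have eA1 : |x.1| = x.1 := abs_of_nonneg hx1
  have eA2 : |x.2| = x.2 := abs_of_nonneg hx2
  have eB1 : |x.1 - a| = a - x.1 := by
    rw [abs_sub_comm]; exact abs_of_nonneg (by linarith)
  have eC2 : |x.2 - b| = b - x.2 := by
    rw [abs_sub_comm]; exact abs_of_nonneg (by linarith)
  rw [eA1, eA2] at A
  rw [eB1, eA2] at B
  rw [eA1, eC2] at C
  -- now A : |(φ x).1 - (φ 0).1| + |(φ x).2 - (φ 0).2| = x.1 + x.2, etc.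
  have habs1 : |ε₁ * a| = a := by
    rcases hε₁ with rfl|rfl
    · rw [one_mul, abs_of_pos ha]
    · rw [neg_one_mul, abs_neg, abs_of_pos ha]
  have habs2 : |ε₂ * b| = b := by
    rcases hε₂ with rfl|rfl
    · rw [one_mul, abs_of_pos hb]
    · rw [neg_one_mul, abs_neg, abs_of_pos hb]
  have tri1 : a ≤ |(φ x).1 - (φ (0,0)).1| + |(φ x).1 - ((φ (0,0)).1 + ε₁ * a)| := by
    have h := abs_sub_le (ε₁ * a + (φ (0,0)).1) (φ x).1 (φ (0,0)).1
    have e : ε₁ * a + (φ (0,0)).1 - (φ (0,0)).1 = ε₁ * a := by ring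
    rw [e] at h
    rw [habs1] at h
    have e2 : |ε₁ * a + (φ (0,0)).1 - (φ x).1| = |(φ x).1 - ((φ (0,0)).1 + ε₁ * a)| := by
      rw [abs_sub_comm]; ring_nf
    rw [e2] at h
    linarith
  have tri2 : b ≤ |(φ x).2 - (φ (0,0)).2| + |(φ x).2 - ((φ (0,0)).2 + ε₂ * b)| := by
    have h := abs_sub_le (ε₂ * b + (φ (0,0)).2) (φ x).2 (φ (0,0)).2
    have e : ε₂ * b + (φ (0,0)).2 - (φ (0,0)).2 = ε₂ * b := by ring
    rw [e] at h
    rw [habs2] at h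
    have e2 : |ε₂ * b + (φ (0,0)).2 - (φ x).2| = |(φ x).2 - ((φ (0,0)).2 + ε₂ * b)| := by
      rw [abs_sub_comm]; ring_nf
    rw [e2] at h
    linarith
  have E1 : |(φ x).1 - (φ (0,0)).1| = x.1 := by linarith
  have E1' : |(φ x).1 - ((φ (0,0)).1 + ε₁ * a)| = a - x.1 := by linarith
  have E2 : |(φ x).2 - (φ (0,0)).2| = x.2 := by linarith
  have E2' : |(φ x).2 - ((φ (0,0)).2 + ε₂ * b)| = b - x.2 := by linarith
  have r1 : (φ x).1 - (φ (0,0)).1 - ε₁ * a = (φ x).1 - ((φ (0,0)).1 + ε₁ * a) := by ring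
  have r2 : (φ x).2 - (φ (0,0)).2 - ε₂ * b = (φ x).2 - ((φ (0,0)).2 + ε₂ * b) := by ring
  have z1 := solve1 a x.1 ε₁ ((φ x).1 - (φ (0,0)).1) hx1 hx1' hε₁ E1 (by rw [r1]; exact E1')
  have z2 := solve1 b x.2 ε₂ ((φ x).2 - (φ (0,0)).2) hx2 hx2' hε₂ E2 (by rw [r2]; exact E2')
  have : φ x = ((φ x).1, (φ x).2) := rfl
  rw [this, Prod.mk.injEq]
  constructor <;> linarith

private lemma image1 (v1 v2 ε₁ ε₂ a b : ℝ)
    (hε₁ : ε₁ = 1 ∨ ε₁ = -1) (hε₂ : ε₂ = 1 ∨ ε₂ = -1) (φ : ℝ × ℝ → ℝ × ℝ)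
    (hf : ∀ x ∈ Set.Icc (0:ℝ) a ×ˢ Set.Icc (0:ℝ) b,
        φ x = (v1 + ε₁ * x.1, v2 + ε₂ * x.2)) :
    ∃ c₁ c₂ : ℝ, φ '' (Set.Icc (0:ℝ) a ×ˢ Set.Icc (0:ℝ) b) =
      Set.Icc c₁ (c₁ + a) ×ˢ Set.Icc c₂ (c₂ + b) := by
  obtain ⟨c₁, h1⟩ := oneD v1 ε₁ a hε₁
  obtain ⟨c₂, h2⟩ := oneD v2 ε₂ b hε₂
  refine ⟨c₁, c₂, ?_⟩
  have hp := Set.prod_image_image_eq (s := Set.Icc (0:ℝ) a) (t := Set.Icc (0:ℝ) b)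
      (m₁ := fun t => v1 + ε₁ * t) (m₂ := fun t => v2 + ε₂ * t)
  rw [h1, h2] at hp
  rw [Set.image_congr hf]
  exact hp.symm

private lemma image2 (v1 v2 ε₁ ε₂ a b : ℝ)
    (hε₁ : ε₁ = 1 ∨ ε₁ = -1) (hε₂ : ε₂ = 1 ∨ ε₂ = -1) (φ : ℝ × ℝ → ℝ × ℝ)
    (hf : ∀ x ∈ Set.Icc (0:ℝ) a ×ˢ Set.Icc (0:ℝ) b,
        φ x = (v1 + ε₁ * x.2, v2 + ε₂ * x.1)) :
    ∃ c₁ c₂ : ℝ, φ '' (Set.Icc (0:ℝ) a ×ˢ Set.Icc (0:ℝ) b) =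
      Set.Icc c₁ (c₁ + b) ×ˢ Set.Icc c₂ (c₂ + a) := by
  obtain ⟨c₁, h1⟩ := oneD v1 ε₁ b hε₁
  obtain ⟨c₂, h2⟩ := oneD v2 ε₂ a hε₂
  refine ⟨c₁, c₂, ?_⟩
  have hf' : ∀ x ∈ Set.Icc (0:ℝ) a ×ˢ Set.Icc (0:ℝ) b,
      φ x = ((fun p : ℝ × ℝ => (v1 + ε₁ * p.1, v2 + ε₂ * p.2)) ∘ Prod.swap) x := by
    intro x hx
    exact hf x hx
  have hp := Set.prod_image_image_eq (s := Set.Icc (0:ℝ) b) (t := Set.Icc (0:ℝ) a)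
      (m₁ := fun t => v1 + ε₁ * t) (m₂ := fun t => v2 + ε₂ * t)
  rw [h1, h2] at hp
  rw [Set.image_congr hf', Set.image_comp, Set.image_swap_prod]
  exact hp.symm

/-- Any isometric embedding of a nondegenerate rectangle R = [0,a] × [0,b]
    (with the l1-metric) into (ℝ², d₁) is, up to a translation, a composition of
    coordinate sign changes and possibly a swap of the coordinates; in
    particular the image of R is an axis-parallel rectangle with side lengths
    a and b (possibly interchanged). -/
theorem rectangle_embeds_axis_parallel (a b : ℝ) (ha : 0 < a) (hb : 0 < b)
    (φ : ℝ × ℝ → ℝ × ℝ)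
    (hφ : ∀ x ∈ Set.Icc (0:ℝ) a ×ˢ Set.Icc (0:ℝ) b,
          ∀ y ∈ Set.Icc (0:ℝ) a ×ˢ Set.Icc (0:ℝ) b,
          d1 (φ x) (φ y) = d1 x y) :
    (∃ v : ℝ × ℝ, ∃ ε₁ ε₂ : ℝ, (ε₁ = 1 ∨ ε₁ = -1) ∧ (ε₂ = 1 ∨ ε₂ = -1) ∧
      ((∀ x ∈ Set.Icc (0:ℝ) a ×ˢ Set.Icc (0:ℝ) b,
          φ x = (v.1 + ε₁ * x.1, v.2 + ε₂ * x.2)) ∨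
       (∀ x ∈ Set.Icc (0:ℝ) a ×ˢ Set.Icc (0:ℝ) b,
          φ x = (v.1 + ε₁ * x.2, v.2 + ε₂ * x.1)))) ∧
    (∃ c₁ c₂ : ℝ,
      φ '' (Set.Icc (0:ℝ) a ×ˢ Set.Icc (0:ℝ) b) =
          Set.Icc c₁ (c₁ + a) ×ˢ Set.Icc c₂ (c₂ + b) ∨
      φ '' (Set.Icc (0:ℝ) a ×ˢ Set.Icc (0:ℝ) b) =
          Set.Icc c₁ (c₁ + b) ×ˢ Set.Icc c₂ (c₂ + a)) := by
  have m00 : ((0:ℝ),(0:ℝ)) ∈ Set.Icc (0:ℝ) a ×ˢ Set.Icc (0:ℝ) b :=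
    ⟨⟨le_refl 0, ha.le⟩, le_refl 0, hb.le⟩
  have ma0 : ((a:ℝ),(0:ℝ)) ∈ Set.Icc (0:ℝ) a ×ˢ Set.Icc (0:ℝ) b :=
    ⟨⟨ha.le, le_refl a⟩, le_refl 0, hb.le⟩
  have m0b : ((0:ℝ),(b:ℝ)) ∈ Set.Icc (0:ℝ) a ×ˢ Set.Icc (0:ℝ) b :=
    ⟨⟨le_refl 0, ha.le⟩, hb.le, le_refl b⟩
  have mab : ((a:ℝ),(b:ℝ)) ∈ Set.Icc (0:ℝ) a ×ˢ Set.Icc (0:ℝ) b :=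
    ⟨⟨ha.le, le_refl a⟩, hb.le, le_refl b⟩
  have bQ : d1 (φ (0,0)) (φ (a,0)) + d1 (φ (a,0)) (φ (a,b)) = d1 (φ (0,0)) (φ (a,b)) := by
    rw [hφ _ m00 _ ma0, hφ _ ma0 _ mab, hφ _ m00 _ mab]
    simp [d1, abs_of_pos ha, abs_of_pos hb]
  have bS : d1 (φ (0,0)) (φ (0,b)) + d1 (φ (0,b)) (φ (a,b)) = d1 (φ (0,0)) (φ (a,b)) := by
    rw [hφ _ m00 _ m0b, hφ _ m0b _ mab, hφ _ m00 _ mab]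
    simp [d1, abs_of_pos ha, abs_of_pos hb]
    ring
  have bP : d1 (φ (a,0)) (φ (0,0)) + d1 (φ (0,0)) (φ (0,b)) = d1 (φ (a,0)) (φ (0,b)) := by
    rw [hφ _ ma0 _ m00, hφ _ m00 _ m0b, hφ _ ma0 _ m0b]
    simp [d1, abs_of_pos ha, abs_of_pos hb]
  have bT : d1 (φ (a,0)) (φ (a,b)) + d1 (φ (a,b)) (φ (0,b)) = d1 (φ (a,0)) (φ (0,b)) := by
    rw [hφ _ ma0 _ mab, hφ _ mab _ m0b, hφ _ ma0 _ m0b]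
    simp [d1, abs_of_pos ha, abs_of_pos hb]
    ring
  have tr1 := tripod (φ (0,0)).1 (φ (a,0)).1 (φ (0,b)).1 (φ (a,b)).1
    (d1_split bQ).1 (d1_split bS).1 (d1_split bP).1 (d1_split bT).1
  have tr2 := tripod (φ (0,0)).2 (φ (a,0)).2 (φ (0,b)).2 (φ (a,b)).2
    (d1_split bQ).2 (d1_split bS).2 (d1_split bP).2 (d1_split bT).2
  have hQv : |(φ (a,0)).1 - (φ (0,0)).1| + |(φ (a,0)).2 - (φ (0,0)).2| = a := by
    have h := hφ _ ma0 _ m00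
    unfold d1 at h
    simpa [abs_of_pos ha] using h
  have hSv : |(φ (0,b)).1 - (φ (0,0)).1| + |(φ (0,b)).2 - (φ (0,0)).2| = b := by
    have h := hφ _ m0b _ m00
    unfold d1 at h
    simpa [abs_of_pos hb] using h
  have main : ∃ v : ℝ × ℝ, ∃ ε₁ ε₂ : ℝ, (ε₁ = 1 ∨ ε₁ = -1) ∧ (ε₂ = 1 ∨ ε₂ = -1) ∧
      ((∀ x ∈ Set.Icc (0:ℝ) a ×ˢ Set.Icc (0:ℝ) b,
          φ x = (v.1 + ε₁ * x.1, v.2 + ε₂ * x.2)) ∨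
       (∀ x ∈ Set.Icc (0:ℝ) a ×ˢ Set.Icc (0:ℝ) b,
          φ x = (v.1 + ε₁ * x.2, v.2 + ε₂ * x.1))) := by
    rcases tr1 with ⟨hq1, hs1⟩ | ⟨hs1, hq1⟩ <;> rcases tr2 with ⟨hq2, hs2⟩ | ⟨hs2, hq2⟩
    · -- Q = P : contradiction
      exfalso
      rw [hq1, hq2] at hQv
      simp at hQv
      linarith
    · -- swap case
      obtain ⟨ε₁, hε₁, hεa⟩ : ∃ ε : ℝ, (ε = 1 ∨ ε = -1) ∧ (φ (a,0)).2 - (φ (0,0)).2 = ε * a := by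
        have h : |(φ (a,0)).2 - (φ (0,0)).2| = a := by
          rw [hq1] at hQv; simpa using hQv
        rcases (abs_eq ha.le).mp h with h'|h'
        · exact ⟨1, Or.inl rfl, by linarith⟩
        · exact ⟨-1, Or.inr rfl, by linarith⟩
      obtain ⟨ε₂, hε₂, hεb⟩ : ∃ ε : ℝ, (ε = 1 ∨ ε = -1) ∧ (φ (0,b)).1 - (φ (0,0)).1 = ε * b := by
        have h : |(φ (0,b)).1 - (φ (0,0)).1| = b := by
          rw [hs2] at hSv; simpa using hSv
        rcases (abs_eq hb.le).mp h with h'|h'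
        · exact ⟨1, Or.inl rfl, by linarith⟩
        · exact ⟨-1, Or.inr rfl, by linarith⟩
      have hφ' : ∀ x ∈ Set.Icc (0:ℝ) a ×ˢ Set.Icc (0:ℝ) b,
          ∀ y ∈ Set.Icc (0:ℝ) a ×ˢ Set.Icc (0:ℝ) b,
          d1 ((Prod.swap ∘ φ) x) ((Prod.swap ∘ φ) y) = d1 x y := by
        intro x hx y hy
        rw [Function.comp_apply, Function.comp_apply, d1_swap]
        exact hφ x hx y hy
      have hQ' : (Prod.swap ∘ φ) (a,0) =
          (((Prod.swap ∘ φ) (0,0)).1 + ε₁ * a, ((Prod.swap ∘ φ) (0,0)).2) := by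
        rw [Prod.ext_iff]
        constructor
        · show (φ (a,0)).2 = (φ (0,0)).2 + ε₁ * a
          linarith [hεa]
        · show (φ (a,0)).1 = (φ (0,0)).1
          exact hq1
      have hS' : (Prod.swap ∘ φ) (0,b) =
          (((Prod.swap ∘ φ) (0,0)).1, ((Prod.swap ∘ φ) (0,0)).2 + ε₂ * b) := by
        rw [Prod.ext_iff]
        constructor
        · show (φ (0,b)).2 = (φ (0,0)).2
          exact hs2
        · show (φ (0,b)).1 = (φ (0,0)).1 + ε₂ * b
          linarith [hεb]
      have key := lemA a b ε₁ ε₂ ha hb hε₁ hε₂ (Prod.swap ∘ φ) hφ' hQ' hS'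
      refine ⟨φ (0,0), ε₂, ε₁, hε₂, hε₁, Or.inr ?_⟩
      intro x hx
      have h := congrArg Prod.swap (key x hx)
      simp only [Function.comp_apply, Prod.swap_swap, Prod.swap_prod_mk,
        Prod.fst_swap, Prod.snd_swap] at h
      rw [h]
    · -- straight case
      obtain ⟨ε₁, hε₁, hεa⟩ : ∃ ε : ℝ, (ε = 1 ∨ ε = -1) ∧ (φ (a,0)).1 - (φ (0,0)).1 = ε * a := by
        have h : |(φ (a,0)).1 - (φ (0,0)).1| = a := by
          rw [hq2] at hQv; simpa using hQv
        rcases (abs_eq ha.le).mp h with h'|h'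
        · exact ⟨1, Or.inl rfl, by linarith⟩
        · exact ⟨-1, Or.inr rfl, by linarith⟩
      obtain ⟨ε₂, hε₂, hεb⟩ : ∃ ε : ℝ, (ε = 1 ∨ ε = -1) ∧ (φ (0,b)).2 - (φ (0,0)).2 = ε * b := by
        have h : |(φ (0,b)).2 - (φ (0,0)).2| = b := by
          rw [hs1] at hSv; simpa using hSv
        rcases (abs_eq hb.le).mp h with h'|h'
        · exact ⟨1, Or.inl rfl, by linarith⟩
        · exact ⟨-1, Or.inr rfl, by linarith⟩
      have hQ2 : φ (a,0) = ((φ (0,0)).1 + ε₁ * a, (φ (0,0)).2) := by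
        rw [Prod.ext_iff]
        constructor
        · show (φ (a,0)).1 = (φ (0,0)).1 + ε₁ * a
          linarith [hεa]
        · show (φ (a,0)).2 = (φ (0,0)).2
          exact hq2
      have hS2 : φ (0,b) = ((φ (0,0)).1, (φ (0,0)).2 + ε₂ * b) := by
        rw [Prod.ext_iff]
        constructor
        · show (φ (0,b)).1 = (φ (0,0)).1
          exact hs1
        · show (φ (0,b)).2 = (φ (0,0)).2 + ε₂ * b
          linarith [hεb]
      have key := lemA a b ε₁ ε₂ ha hb hε₁ hε₂ φ hφ hQ2 hS2
      exact ⟨φ (0,0), ε₁, ε₂, hε₁, hε₂, Or.inl key⟩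
    · -- S = P : contradiction
      exfalso
      rw [hs1, hs2] at hSv
      simp at hSv
      linarith
  refine ⟨main, ?_⟩
  obtain ⟨v, ε₁, ε₂, hε₁, hε₂, hd⟩ := main
  rcases hd with h|h
  · obtain ⟨c₁, c₂, him⟩ := image1 v.1 v.2 ε₁ ε₂ a b hε₁ hε₂ φ h
    exact ⟨c₁, c₂, Or.inl him⟩
  · obtain ⟨c₁, c₂, him⟩ := image2 v.1 v.2 ε₁ ε₂ a b hε₁ hε₂ φ h
    exact ⟨c₁, c₂, Or.inr him⟩
end

section
/- Let R = [a,b] × [c,d] with a < b and c < d be an axis-parallel rectangle in ℝ² with corners q₁ = (a,c), q₂ = (b,c), q₃ = (b,d), q₄ = (a,d), and let S = {z ∈ ℝ² : a ≤ z₁ ≤ b, z₂ ≥ d} be the half-strip above R. If p, p' ∈ S satisfy d₁(p, q_i) = d₁(p', q_i) for i = 1,2,3,4, then p = p'. -/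
/-- In the half-strip above an axis-parallel rectangle R = [a,b] × [c,d], a
    point is uniquely determined by its l1-distances to the four corners of R. -/
theorem halfstrip_point_determined (a b c d : ℝ) (hab : a < b) (hcd : c < d)
    (p p' : ℝ × ℝ)
    (hp : a ≤ p.1 ∧ p.1 ≤ b ∧ d ≤ p.2) (hp' : a ≤ p'.1 ∧ p'.1 ≤ b ∧ d ≤ p'.2)
    (h1 : d1 p (a, c) = d1 p' (a, c)) (h2 : d1 p (b, c) = d1 p' (b, c))
    (h3 : d1 p (b, d) = d1 p' (b, d)) (h4 : d1 p (a, d) = d1 p' (a, d)) :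
    p = p' := by
  obtain ⟨ha, hb, hd⟩ := hp
  obtain ⟨ha', hb', hd'⟩ := hp'
  simp only [d1] at h1 h2
  rw [abs_of_nonneg (by linarith), abs_of_nonneg (by linarith),
    abs_of_nonneg (by linarith), abs_of_nonneg (by linarith)] at h1
  rw [abs_of_nonpos (by linarith), abs_of_nonneg (by linarith),
    abs_of_nonpos (by linarith), abs_of_nonneg (by linarith)] at h2
  have : p.2 = p'.2 := by linarith
  have : p.1 = p'.1 := by linarith
  exact Prod.ext ‹_› ‹_›
end
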